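/- arXiv:1505.04184 — 5 statements merged into one kernel-verified Lean document; each statement's English description precedes it below -/
import Mathlib

section
/- With φ as defined on trilinear forms on a finite-dimensional rational vector space V by (φα)(x,y,z) = α(x,z,y) − α(z,y,x), the map (1/3)·φ² is a projection onto the subspace C of trilinear forms α satisfying α(x,y,z) + α(z,x,y) + α(y,z,x) = 0 for all x,y,z; i.e. (1/3)φ² is idempotent with image C. -/
/-- The trilinearity of a map `α : V → V → V → ℚ`. -/
def Trilinear {V : Type*} [AddCommGroup V] [Module ℚ V] (α : V → V → V → ℚ) : Prop :=
  (∀ x x' y z, α (x + x') y z = α x y z + α x' y z) ∧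
  (∀ (c : ℚ) x y z, α (c • x) y z = c * α x y z) ∧
  (∀ x y y' z, α x (y + y') z = α x y z + α x y' z) ∧
  (∀ (c : ℚ) x y z, α x (c • y) z = c * α x y z) ∧
  (∀ x y z z', α x y (z + z') = α x y z + α x y z') ∧
  (∀ (c : ℚ) x y z, α x y (c • z) = c * α x y z)

/-- The map `φ` on trilinear forms, `(φα)(x,y,z) := α(x,z,y) − α(z,y,x)`. -/
def phiMap {V : Type*} (α : V → V → V → ℚ) : V → V → V → ℚ :=
  fun x y z => α x z y - α z y x

/-- `(1/3)·φ²` is a projection onto the subspace `C` of trilinear forms whose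
cyclic symmetrization vanishes: its values lie in `C`, it is the identity on `C`, and it is
idempotent. -/
theorem stmt_1 (V : Type*) [AddCommGroup V] [Module ℚ V] [FiniteDimensional ℚ V]
    (α : V → V → V → ℚ) (hα : Trilinear α) :
    let P : V → V → V → ℚ := fun x y z => (1 / 3 : ℚ) * phiMap (phiMap α) x y z
    (∀ x y z, P x y z + P z x y + P y z x = 0) ∧
    ((∀ x y z : V, α x y z + α z x y + α y z x = 0) → ∀ x y z, P x y z = α x y z) ∧
    (∀ x y z, (1 / 3 : ℚ) * phiMap (phiMap P) x y z = P x y z) := by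
  intro P
  refine ⟨fun x y z => ?_, fun h x y z => ?_, fun x y z => ?_⟩
  · simp only [P, phiMap]; ring
  · simp only [P, phiMap]
    have := h x y z
    linarith
  · simp only [P, phiMap]; ring
end

section
/- Let V be a finite-dimensional rational vector space. φ restricts to a linear isomorphism from K[Sym²V^∨ ⊗ V^∨] (the trilinear forms symmetric in the first two arguments whose full symmetrization vanishes) onto 𝒦[Alt²V^∨ ⊗ V^∨] (the trilinear forms antisymmetric in the first two arguments whose full antisymmetrization vanishes). -/
/-- `K[Sym²V^∨ ⊗ V^∨]`: trilinear forms symmetric in the first two arguments whose full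
symmetrization vanishes. -/
def KSym (V : Type*) [AddCommGroup V] [Module ℚ V] : Set (V → V → V → ℚ) :=
  {α | Trilinear α ∧ (∀ x y z, α x y z = α y x z) ∧
    (∀ x y z, α x y z + α x z y + α y x z + α y z x + α z x y + α z y x = 0)}

/-- `𝒦[Alt²V^∨ ⊗ V^∨]`: trilinear forms antisymmetric in the first two arguments whose full
antisymmetrization vanishes. -/
def KAlt (V : Type*) [AddCommGroup V] [Module ℚ V] : Set (V → V → V → ℚ) :=
  {α | Trilinear α ∧ (∀ x y z, α x y z = -α y x z) ∧
    (∀ x y z, α x y z - α x z y - α y x z + α y z x + α z x y - α z y x = 0)}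

/-- `φ` restricts to a (linear) isomorphism from `K[Sym²V^∨ ⊗ V^∨]`
onto `𝒦[Alt²V^∨ ⊗ V^∨]`. -/
theorem stmt_3 (V : Type*) [AddCommGroup V] [Module ℚ V] [FiniteDimensional ℚ V] :
    Set.BijOn (phiMap : (V → V → V → ℚ) → (V → V → V → ℚ)) (KSym V) (KAlt V) := by
  refine ⟨?_, ?_, ?_⟩
  · -- MapsTo
    rintro α ⟨⟨h1, h2, h3, h4, h5, h6⟩, hS, hSig⟩
    refine ⟨⟨?_, ?_, ?_, ?_, ?_, ?_⟩, ?_, ?_⟩ <;> intros <;> simp only [phiMap]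
    · rw [h1, h5]; ring
    · rw [h2, h6]; ring
    · rw [h5, h3]; ring
    · rw [h6, h4]; ring
    · rw [h3, h1]; ring
    · rw [h4, h2]; ring
    · rename_i x y z; have := hS x z y; have := hS z y x; linarith
    · ring
  · -- InjOn
    rintro α ⟨⟨_, _, _, _, _, _⟩, hS, hSig⟩ α' ⟨⟨_, _, _, _, _, _⟩, hS', hSig'⟩ h
    funext x y z
    have e1 := congrFun (congrFun (congrFun h x) y) z
    have e2 := congrFun (congrFun (congrFun h y) z) x
    simp only [phiMap] at e1 e2
    have := hS y x z; have := hS x z y; have := hS z y x; have := hS y z x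
    have := hS' y x z; have := hS' x z y; have := hS' z y x; have := hS' y z x
    have := hSig x y z; have := hSig' x y z
    linarith
  · -- SurjOn
    rintro β ⟨⟨h1, h2, h3, h4, h5, h6⟩, hA, hDel⟩
    refine ⟨fun x y z => (β x y z + 2 * β y z x) / 3, ⟨⟨?_, ?_, ?_, ?_, ?_, ?_⟩, ?_, ?_⟩, ?_⟩
    · intro x x' y z; dsimp only; rw [h1, h5]; ring
    · intro c x y z; dsimp only; rw [h2, h6]; ring
    · intro x y y' z; dsimp only; rw [h3, h1]; ring
    · intro c x y z; dsimp only; rw [h4, h2]; ring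
    · intro x y z z'; dsimp only; rw [h5, h3]; ring
    · intro c x y z; dsimp only; rw [h6, h4]; ring
    · intro x y z; dsimp only
      have := hA y x z; have := hA z x y; have := hA z y x; have := hDel x y z
      linarith
    · intro x y z; dsimp only
      have := hA y x z; have := hA z x y; have := hA z y x
      have := hA x z y; have := hA y z x; have := hA x y z
      have := hDel x y z; have := hDel y z x; have := hDel z x y
      linarith
    · funext x y z
      show (β x z y + 2 * β z y x) / 3 - (β z y x + 2 * β y x z) / 3 = β x y z
      have := hDel x y z; have := hA y x z; have := hA z x y; have := hA z y x
      linarith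
end

section
/- Let V be a finite-dimensional rational vector space of dimension n. The space 𝒦[Sym²Alt²V^∨] of quadrilinear forms R(x,y,z,w) on V that are antisymmetric in (x,y), antisymmetric in (z,w), symmetric under simultaneous swap (x,y)↔(z,w), and satisfy the first Bianchi identity R(x,y,z,w) + R(y,z,x,w) + R(z,x,y,w) = 0, has dimension n²(n²−1)/12. -/
/-!
Let `S ≅ Sym² Λ² V^∨` be the space of 4-forms that are antisymmetric in each pair of arguments and
symmetric under exchanging the pairs. For `R ∈ S` the Bianchi sum
`b R (x, y, z, w) = R(x, y, z, w) + R(y, z, x, w) + R(z, x, y, w)` is alternating, and every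
alternating form `a` lies in `S` with `b a = 3 a`. So `b : S → Λ⁴ V^∨` is onto and its kernel is the
space of curvature tensors, whence its dimension is `C(N + 1, 2) - C(n, 4)` with `N = C(n, 2)`,
which is `n²(n² - 1)/12`. The dimension of `S` is read off the coordinates `R(eᵢ, eⱼ, eₖ, eₗ)`
with `i < j`, `k < l`, which are symmetric under `(i, j) ↔ (k, l)` and otherwise free.
-/

open Module

/-- The space of algebraic curvature tensors on `V`: quadrilinear forms antisymmetric in the
first pair and the second pair of arguments, symmetric under swapping the two pairs, and
satisfying the first Bianchi identity. -/
def curvatureTensors (V : Type*) [AddCommGroup V] [Module ℚ V] :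
    Submodule ℚ (MultilinearMap ℚ (fun _ : Fin 4 => V) ℚ) where
  carrier := {R | ∀ x y z w : V,
    R ![y, x, z, w] = -R ![x, y, z, w] ∧
    R ![x, y, w, z] = -R ![x, y, z, w] ∧
    R ![z, w, x, y] = R ![x, y, z, w] ∧
    R ![x, y, z, w] + R ![y, z, x, w] + R ![z, x, y, w] = 0}
  add_mem' := by
    intro a b ha hb x y z w
    obtain ⟨h1, h2, h3, h4⟩ := ha x y z w
    obtain ⟨g1, g2, g3, g4⟩ := hb x y z w
    refine ⟨?_, ?_, ?_, ?_⟩ <;> simp only [MultilinearMap.add_apply] <;> linarith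
  zero_mem' := by intro x y z w; simp
  smul_mem' := by
    intro c a ha x y z w
    obtain ⟨h1, h2, h3, h4⟩ := ha x y z w
    refine ⟨?_, ?_, ?_, ?_⟩ <;> simp only [MultilinearMap.smul_apply, smul_eq_mul]
    · linear_combination c * h1
    · linear_combination c * h2
    · linear_combination c * h3
    · linear_combination c * h4

theorem Nat.twelve_mul_choose_choose_two_add_one_two (n : ℕ) :
    12 * (n.choose 2 + 1).choose 2 = 12 * n.choose 4 + n ^ 2 * (n ^ 2 - 1) := by
  rcases Nat.eq_zero_or_pos n with rfl | hn
  · rfl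
  have h1 : 1 ≤ n ^ 2 := Nat.one_le_pow _ _ hn
  qify [h1]
  rw [Nat.cast_choose_two, Nat.cast_add, Nat.cast_choose_two,
    Nat.cast_choose_eq_descPochhammer_div]
  simp only [Nat.cast_one, add_sub_cancel_right, descPochhammer_succ_eval, descPochhammer_one,
    Polynomial.eval_X, Nat.cast_ofNat, Nat.factorial]
  ring

theorem Fintype.card_subtype_fst_lt_snd (ι : Type*) [Fintype ι] [LinearOrder ι] :
    Fintype.card {p : ι × ι // p.1 < p.2} = (Fintype.card ι).choose 2 := by
  rw [← Sym2.card_subtype_not_diag]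
  refine Fintype.card_congr ((Equiv.subtypeSubtypeEquivSubtype (fun h => h.le)).symm.trans
    (Sym2.sortEquiv.subtypeEquiv fun z => ?_).symm)
  induction z using Sym2.ind
  simp [eq_comm]

theorem finrank_alternatingMap_fin (K V : Type*) [Field K] [AddCommGroup V] [Module K V]
    [FiniteDimensional K V] (k : ℕ) :
    finrank K (V [⋀^Fin k]→ₗ[K] K) = (finrank K V).choose k := by
  rw [exteriorPower.alternatingMapLinearEquiv.finrank_eq, Subspace.dual_finrank_eq,
    exteriorPower.finrank_eq]

theorem eq_vec_four {α : Type*} (v : Fin 4 → α) : v = ![v 0, v 1, v 2, v 3] := by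
  ext i; fin_cases i <;> rfl

theorem eq_zero_of_antisymm_of_lt {α : Type*} [LinearOrder α] {f : α → α → ℚ}
    (hf : ∀ i j, f j i = -f i j) (h : ∀ i j, i < j → f i j = 0) (i j : α) : f i j = 0 := by
  rcases lt_trichotomy i j with hij | rfl | hij
  · exact h i j hij
  · linarith [hf i i]
  · rw [hf j i, h j i hij, neg_zero]

noncomputable section

namespace CurvatureTensor

variable {V : Type*} [AddCommGroup V] [Module ℚ V]

variable (V) in
/-- The space `Sym² Λ² V^∨` of the paper. -/
def pairSymmetricForms : Submodule ℚ (MultilinearMap ℚ (fun _ : Fin 4 => V) ℚ) where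
  carrier := {R | ∀ x y z w : V,
    R ![y, x, z, w] = -R ![x, y, z, w] ∧
    R ![x, y, w, z] = -R ![x, y, z, w] ∧
    R ![z, w, x, y] = R ![x, y, z, w]}
  add_mem' := by
    intro R S hR hS x y z w
    obtain ⟨hR₁, hR₂, hR₃⟩ := hR x y z w
    obtain ⟨hS₁, hS₂, hS₃⟩ := hS x y z w
    simp only [add_apply, hR₁, hR₂, hR₃, hS₁, hS₂, hS₃, neg_add, and_self]
  zero_mem' := by intro x y z w; simp
  smul_mem' := by
    intro c R hR x y z w
    obtain ⟨hR₁, hR₂, hR₃⟩ := hR x y z w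
    simp only [smul_apply, smul_eq_mul, hR₁, hR₂, hR₃, mul_neg, and_self]

section Coordinates

variable {ι : Type*} (b : Basis ι ℚ V)

def pairForm (p : ι × ι) (x y : V) : ℚ :=
  b.coord p.1 x * b.coord p.2 y - b.coord p.2 x * b.coord p.1 y

theorem pairForm_swap (p : ι × ι) (x y : V) : pairForm b p y x = -pairForm b p x y := by
  unfold pairForm; ring

def pairFormProd (p q : ι × ι) : MultilinearMap ℚ (fun _ : Fin 4 => V) ℚ :=
  let m (i j k l : ι) := (MultilinearMap.mkPiAlgebra ℚ (Fin 4) ℚ).compLinearMap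
    ![b.coord i, b.coord j, b.coord k, b.coord l]
  m p.1 p.2 q.1 q.2 - m p.2 p.1 q.1 q.2 - m p.1 p.2 q.2 q.1 + m p.2 p.1 q.2 q.1

theorem pairFormProd_apply (p q : ι × ι) (x y z w : V) :
    pairFormProd b p q ![x, y, z, w] = pairForm b p x y * pairForm b q z w := by
  simp only [pairFormProd, add_apply, sub_apply, MultilinearMap.compLinearMap_apply,
    MultilinearMap.mkPiAlgebra_apply, Fin.prod_univ_four, Matrix.cons_val_zero, Basis.coord_apply,
    Matrix.cons_val_one, Matrix.cons_val, pairForm]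
  ring

variable [LinearOrder ι]

theorem pairForm_basis (p q : {p : ι × ι // p.1 < p.2}) :
    pairForm b p.1 (b q.1.1) (b q.1.2) = if p = q then 1 else 0 := by
  obtain ⟨⟨i, j⟩, hij⟩ := p
  obtain ⟨⟨k, l⟩, hkl⟩ := q
  have : ¬(k = j ∧ l = i) := by rintro ⟨rfl, rfl⟩; exact lt_asymm hij hkl
  simp only [pairForm, Basis.coord_apply, Basis.repr_self, Finsupp.single_apply, Subtype.mk.injEq,
    Prod.mk.injEq, ite_zero_mul_ite_zero, mul_one, if_neg this, sub_zero]
  exact if_congr (and_congr eq_comm eq_comm) rfl rfl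

def pairCoords : pairSymmetricForms V →ₗ[ℚ] Sym2 {p : ι × ι // p.1 < p.2} → ℚ where
  toFun R := Sym2.lift ⟨fun p q => R.1 ![b p.1.1, b p.1.2, b q.1.1, b q.1.2],
    fun _ _ => (R.2 _ _ _ _).2.2.symm⟩
  map_add' R S := by ext z; induction z using Sym2.ind; rfl
  map_smul' c R := by ext z; induction z using Sym2.ind; rfl

theorem pairCoords_injective : Function.Injective (pairCoords b) := by
  rw [← LinearMap.ker_eq_bot, LinearMap.ker_eq_bot']
  intro R hR
  have hlt i j k l (hij : i < j) (hkl : k < l) : R.1 ![b i, b j, b k, b l] = 0 :=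
    congrFun hR s(⟨(i, j), hij⟩, ⟨(k, l), hkl⟩)
  have hall i j k l : R.1 ![b i, b j, b k, b l] = 0 := by
    refine eq_zero_of_antisymm_of_lt (f := fun i j => R.1 ![b i, b j, b k, b l])
      (fun i j => (R.2 _ _ _ _).1) (fun i j hij => ?_) i j
    exact eq_zero_of_antisymm_of_lt (f := fun k l => R.1 ![b i, b j, b k, b l])
      (fun k l => (R.2 _ _ _ _).2.1) (hlt i j · · hij) k l
  ext1
  refine Basis.ext_multilinear (fun _ => b) fun v => ?_
  rw [eq_vec_four fun i => b (v i)]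
  exact hall _ _ _ _

variable [Fintype ι]

def ofPairCoords (h : Sym2 {p : ι × ι // p.1 < p.2} → ℚ) :
    MultilinearMap ℚ (fun _ : Fin 4 => V) ℚ :=
  ∑ p, ∑ q, h s(p, q) • pairFormProd b p.1 q.1

theorem ofPairCoords_apply (h : Sym2 {p : ι × ι // p.1 < p.2} → ℚ) (x y z w : V) :
    ofPairCoords b h ![x, y, z, w] =
      ∑ p, ∑ q, h s(p, q) * (pairForm b p.1 x y * pairForm b q.1 z w) := by
  simp [ofPairCoords, pairFormProd_apply]

theorem ofPairCoords_mem (h : Sym2 {p : ι × ι // p.1 < p.2} → ℚ) :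
    ofPairCoords b h ∈ pairSymmetricForms V := by
  intro x y z w
  simp only [ofPairCoords_apply]
  refine ⟨?_, ?_, ?_⟩
  · simp only [pairForm_swap b _ x y, neg_mul, mul_neg, Finset.sum_neg_distrib]
  · simp only [pairForm_swap b _ z w, mul_neg, Finset.sum_neg_distrib]
  · rw [Finset.sum_comm]
    simp only [Sym2.eq_swap, mul_comm (pairForm b _ z w)]

theorem pairCoords_ofPairCoords (h : Sym2 {p : ι × ι // p.1 < p.2} → ℚ) :
    pairCoords b ⟨ofPairCoords b h, ofPairCoords_mem b h⟩ = h := by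
  ext z
  induction z using Sym2.ind with | _ p q
  change ofPairCoords b h _ = _
  simp [ofPairCoords_apply, pairForm_basis]

end Coordinates

theorem finrank_pairSymmetricForms [FiniteDimensional ℚ V] :
    finrank ℚ (pairSymmetricForms V) = ((finrank ℚ V).choose 2 + 1).choose 2 := by
  let b := Module.finBasis ℚ V
  let e := LinearEquiv.ofBijective (pairCoords b)
    ⟨pairCoords_injective b, fun h => ⟨_, pairCoords_ofPairCoords b h⟩⟩
  rw [e.finrank_eq, Module.finrank_fintype_fun_eq_card, Sym2.card,
    Fintype.card_subtype_fst_lt_snd, Fintype.card_fin]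

theorem curvatureTensors_le_pairSymmetricForms :
    curvatureTensors V ≤ pairSymmetricForms V :=
  fun _ hR x y z w => ⟨(hR x y z w).1, (hR x y z w).2.1, (hR x y z w).2.2.1⟩

theorem alternatingMap_mem_pairSymmetricForms (a : V [⋀^Fin 4]→ₗ[ℚ] ℚ) :
    a.toMultilinearMap ∈ pairSymmetricForms V := by
  intro x y z w
  refine ⟨?_, ?_, ?_⟩
  · have : ![y, x, z, w] = ![x, y, z, w] ∘ Equiv.swap 0 1 := by ext i; fin_cases i <;> rfl
    rw [AlternatingMap.coe_multilinearMap, this, a.map_swap _ (by decide)]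
  · have : ![x, y, w, z] = ![x, y, z, w] ∘ Equiv.swap 2 3 := by ext i; fin_cases i <;> rfl
    rw [AlternatingMap.coe_multilinearMap, this, a.map_swap _ (by decide)]
  · have : ![z, w, x, y] =
        ![x, y, z, w] ∘ ⇑(Equiv.swap 0 2 * Equiv.swap 1 3 : Equiv.Perm (Fin 4)) := by
      ext i; fin_cases i <;> rfl
    rw [AlternatingMap.coe_multilinearMap, this, a.map_perm]
    simp

def bianchiSum :
    MultilinearMap ℚ (fun _ : Fin 4 => V) ℚ →ₗ[ℚ] MultilinearMap ℚ (fun _ : Fin 4 => V) ℚ :=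
  let c := (MultilinearMap.domDomCongrLinearEquiv ℚ ℚ V ℚ (Fin.cycleRange (2 : Fin 4))).toLinearMap
  LinearMap.id + c + c ∘ₗ c

theorem bianchiSum_apply (R : MultilinearMap ℚ (fun _ : Fin 4 => V) ℚ) (x y z w : V) :
    bianchiSum R ![x, y, z, w] = R ![x, y, z, w] + R ![y, z, x, w] + R ![z, x, y, w] := by
  have h₁ : (fun i => ![x, y, z, w] (Fin.cycleRange 2 i)) = ![y, z, x, w] := by
    ext i; fin_cases i <;> rfl
  have h₂ :
      (fun i => ![x, y, z, w] (Fin.cycleRange 2 (Fin.cycleRange 2 i))) = ![z, x, y, w] := by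
    ext i; fin_cases i <;> rfl
  rw [← h₁, ← h₂]
  rfl

theorem bianchiSum_eq_zero_of_eq {R : MultilinearMap ℚ (fun _ : Fin 4 => V) ℚ}
    (hR : R ∈ pairSymmetricForms V) {x y z w : V}
    (h : x = y ∨ x = z ∨ x = w ∨ y = z ∨ y = w ∨ z = w) : bianchiSum R ![x, y, z, w] = 0 := by
  have h₁ a b c d := (hR a b c d).1
  have h₂ a b c d := (hR a b c d).2.1
  have h₃ a b c d := (hR a b c d).2.2
  rw [bianchiSum_apply]
  rcases h with rfl | rfl | rfl | rfl | rfl | rfl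
  · linarith [h₁ x x z w, h₁ x z x w]
  · linarith [h₁ x y x w, h₁ x x y w]
  · linarith [h₂ y z x x, h₃ y x z x, h₁ x y z x]
  · linarith [h₁ y y x w, h₁ x y y w]
  · linarith [h₂ z x y y, h₃ x y y z, h₂ x y z y]
  · linarith [h₂ x y z z, h₃ y z z x, h₂ y z x z]

def bianchiMap : pairSymmetricForms V →ₗ[ℚ] V [⋀^Fin 4]→ₗ[ℚ] ℚ where
  toFun R :=
    { bianchiSum R.1 with
      map_eq_zero_of_eq' := fun v i j hv hij => by
        rw [eq_vec_four v]
        apply bianchiSum_eq_zero_of_eq R.2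
        fin_cases i <;> fin_cases j <;> simp_all }
  map_add' R S := by ext; simp
  map_smul' c R := by ext; simp

theorem bianchiMap_alternatingMap (a : V [⋀^Fin 4]→ₗ[ℚ] ℚ) :
    bianchiMap ⟨a.toMultilinearMap, alternatingMap_mem_pairSymmetricForms a⟩ = (3 : ℚ) • a := by
  have cycle (x y z w : V) : a ![y, z, x, w] = a ![x, y, z, w] := by
    have : ![y, z, x, w] = ![x, y, z, w] ∘ Fin.cycleRange 2 := by ext i; fin_cases i <;> rfl
    rw [this, a.map_perm]
    simp [Fin.sign_cycleRange]
  ext v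
  rw [eq_vec_four v]
  change bianchiSum a.toMultilinearMap _ = 3 * a _
  rw [bianchiSum_apply, AlternatingMap.coe_multilinearMap]
  linarith [cycle (v 0) (v 1) (v 2) (v 3), cycle (v 1) (v 2) (v 0) (v 3)]

theorem bianchiMap_surjective : Function.Surjective (bianchiMap (V := V)) := by
  intro a
  refine ⟨(3 : ℚ)⁻¹ • ⟨a.toMultilinearMap, alternatingMap_mem_pairSymmetricForms a⟩, ?_⟩
  rw [map_smul, bianchiMap_alternatingMap, smul_smul]
  norm_num

theorem comap_curvatureTensors_eq_ker_bianchiMap :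
    (curvatureTensors V).comap (pairSymmetricForms V).subtype = LinearMap.ker bianchiMap := by
  ext R
  simp only [Submodule.mem_comap, Submodule.subtype_apply, LinearMap.mem_ker]
  constructor
  · intro hR
    ext v
    rw [eq_vec_four v]
    exact (bianchiSum_apply R.1 _ _ _ _).trans (hR _ _ _ _).2.2.2
  · intro hR x y z w
    refine ⟨(R.2 x y z w).1, (R.2 x y z w).2.1, (R.2 x y z w).2.2, ?_⟩
    rw [← bianchiSum_apply]
    exact DFunLike.congr_fun hR ![x, y, z, w]

theorem finrank_curvatureTensors_add_choose_four [FiniteDimensional ℚ V] :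
    finrank ℚ (curvatureTensors V) + (finrank ℚ V).choose 4 =
      ((finrank ℚ V).choose 2 + 1).choose 2 := by
  rw [← finrank_pairSymmetricForms, ← finrank_alternatingMap_fin ℚ V 4,
    ← bianchiMap.finrank_range_add_finrank_ker, LinearMap.range_eq_top.2 bianchiMap_surjective,
    finrank_top, ← comap_curvatureTensors_eq_ker_bianchiMap,
    (Submodule.comapSubtypeEquivOfLe curvatureTensors_le_pairSymmetricForms).finrank_eq, add_comm]

end CurvatureTensor

end

/-- for an `n`-dimensional rational vector space `V`, the space of algebraic
curvature tensors on `V` has dimension `n²(n²−1)/12`. -/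
theorem stmt_4 (V : Type*) [AddCommGroup V] [Module ℚ V] [FiniteDimensional ℚ V]
    (n : ℕ) (hn : finrank ℚ V = n) :
    finrank ℚ (curvatureTensors V) = n ^ 2 * (n ^ 2 - 1) / 12 := by
  subst hn
  have h := CurvatureTensor.finrank_curvatureTensors_add_choose_four (V := V)
  have h12 := Nat.twelve_mul_choose_choose_two_add_one_two (finrank ℚ V)
  omega
end

section
/- Let V be a rational vector space of dimension at most 3 and let q be a nondegenerate symmetric bilinear form on V. Then every algebraic curvature tensor R on V (antisymmetric in the first pair and second pair of arguments, symmetric under swapping pairs, satisfying the first Bianchi identity) can be written as q ⊛ s for some symmetric bilinear form s on V, where ⊛ is the Kulkarni–Nomizu product. -/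
/-!
In dimension at most three an algebraic curvature tensor has no Weyl part. Concretely, in a
`q`-orthogonal basis `e` any four indices contain a repetition, so the pair antisymmetries
determine `R` from its Ricci-type components `R(e_i, e_j, e_i, e_l)` with `i ≠ j`, `i ≠ l`.
For `s = Ric - (scal / 4) q` the Ricci-type components of `q ⊛ s` agree with those of `R`:
when `j ≠ l` both are `q(e_i, e_i) Ric(e_j, e_l)`, and when `j = l` the claim is an identity
between sectional curvatures that holds because every pair of indices meets `{i, j}`.
-/

open Module

section

variable {K V : Type*}

section KulkarniNomizu

variable [CommRing K] [AddCommGroup V] [Module K V]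

def kulkarniNomizu (q s : V →ₗ[K] V →ₗ[K] K) : MultilinearMap K (fun _ : Fin 4 => V) K where
  toFun v := q (v 0) (v 2) * s (v 1) (v 3) - q (v 2) (v 1) * s (v 0) (v 3)
    - q (v 0) (v 3) * s (v 2) (v 1) + q (v 1) (v 3) * s (v 0) (v 2)
  map_update_add' v i x y := by
    fin_cases i <;> simp [Fin.ext_iff] <;> ring
  map_update_smul' v i c x := by
    fin_cases i <;> simp [Fin.ext_iff] <;> ring

theorem kulkarniNomizu_apply (q s : V →ₗ[K] V →ₗ[K] K) (x y z w : V) :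
    kulkarniNomizu q s ![x, y, z, w] =
      q x z * s y w - q z y * s x w - q x w * s z y + q y w * s x z := rfl

variable {q s : V →ₗ[K] V →ₗ[K] K}

theorem kulkarniNomizu_antisymm_left (hq : ∀ x y, q x y = q y x) (hs : ∀ x y, s x y = s y x)
    (x y z w : V) : kulkarniNomizu q s ![y, x, z, w] = -kulkarniNomizu q s ![x, y, z, w] := by
  simp only [kulkarniNomizu_apply]
  linear_combination s x w * hq y z + s y w * hq x z - q y w * hs z x + q x w * hs y z

theorem kulkarniNomizu_antisymm_right (hq : ∀ x y, q x y = q y x) (hs : ∀ x y, s x y = s y x)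
    (x y z w : V) : kulkarniNomizu q s ![x, y, w, z] = -kulkarniNomizu q s ![x, y, z, w] := by
  simp only [kulkarniNomizu_apply]
  linear_combination q x w * hs y z + s x z * hq y w + q x z * hs y w + s x w * hq y z

end KulkarniNomizu

theorem Fin.eq_or_eq_of_le_three {n : ℕ} (hn : n ≤ 3) (i j k l : Fin n) :
    i = j ∨ i = k ∨ i = l ∨ j = k ∨ j = l ∨ k = l := by
  omega

theorem eq_zero_of_self_eq_neg [Field K] [NeZero (2 : K)] {a : K} (h : a = -a) : a = 0 :=
  (mul_eq_zero.mp (by linear_combination h : (2 : K) * a = 0)).resolve_left two_ne_zero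

section AntisymmetricTensor

variable [Field K] [NeZero (2 : K)] [AddCommGroup V] [Module K V]
  {T : MultilinearMap K (fun _ : Fin 4 => V) K}

theorem apply_self_left_eq_zero (hT : ∀ x y z w, T ![y, x, z, w] = -T ![x, y, z, w])
    (x z w : V) : T ![x, x, z, w] = 0 :=
  eq_zero_of_self_eq_neg (hT x x z w)

theorem apply_self_right_eq_zero (hT : ∀ x y z w, T ![x, y, w, z] = -T ![x, y, z, w])
    (x y z : V) : T ![x, y, z, z] = 0 :=
  eq_zero_of_self_eq_neg (hT x y z z)

theorem eq_zero_of_apply_basis_eq_zero {n : ℕ} (hn : n ≤ 3) (b : Basis (Fin n) K V)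
    (hT₁ : ∀ x y z w, T ![y, x, z, w] = -T ![x, y, z, w])
    (hT₂ : ∀ x y z w, T ![x, y, w, z] = -T ![x, y, z, w])
    (h : ∀ i j l, i ≠ j → i ≠ l → T ![b i, b j, b i, b l] = 0) : T = 0 := by
  suffices h' : ∀ i j k l, T ![b i, b j, b k, b l] = 0 by
    refine Basis.ext_multilinear (fun _ => b) fun v => ?_
    rw [zero_apply, ← h' (v 0) (v 1) (v 2) (v 3)]
    congr 1; ext m; fin_cases m <;> rfl
  intro i j k l
  by_cases hij : i = j
  · rw [hij, apply_self_left_eq_zero hT₁]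
  by_cases hkl : k = l
  · rw [hkl, apply_self_right_eq_zero hT₂]
  rcases Fin.eq_or_eq_of_le_three hn i j k l with h' | rfl | rfl | rfl | rfl | h'
  · exact absurd h' hij
  · exact h i j l hij hkl
  · rw [hT₂, h i j k hij (Ne.symm hkl), neg_zero]
  · rw [← neg_eq_zero, ← hT₁, h j i l (Ne.symm hij) hkl]
  · rw [← neg_neg (T _), ← hT₂, ← hT₁, h j i k (Ne.symm hij) (Ne.symm hkl)]
  · exact absurd h' hkl

end AntisymmetricTensor

-- Each pair `{k, m}` of indices meets `{i, j}`, since `n ≤ 3`.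
theorem sum_add_sum_sub_half_sum_eq_of_le_three [Field K] [NeZero (2 : K)] {n : ℕ} (hn : n ≤ 3)
    {κ : Fin n → Fin n → K} (hκ : ∀ i j, κ i j = κ j i) (hκ₀ : ∀ i, κ i i = 0)
    {i j : Fin n} (hij : i ≠ j) :
    ∑ k, κ k i + ∑ k, κ k j - (∑ k, ∑ m, κ k m) / 2 = κ i j := by
  interval_cases n <;> fin_cases i <;> fin_cases j <;>
    simp [Fin.sum_univ_succ, hκ₀, hκ 1 0, hκ 2 0, hκ 2 1] at hij ⊢ <;> field_simp <;> ring

noncomputable section Schouten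

variable [Field K] [AddCommGroup V] [Module K V] {n : ℕ}
  (R : MultilinearMap K (fun _ : Fin 4 => V) K) (q : V →ₗ[K] V →ₗ[K] K) (b : Basis (Fin n) K V)

/- For a `q`-orthogonal basis `b`, contracting with `q⁻¹` is dividing by `q (b k) (b k)`, so these
are the Ricci tensor, scalar curvature and sectional curvatures of `R` in the basis `b`. -/
def ricciMatrix : Matrix (Fin n) (Fin n) K :=
  fun i j => ∑ k, R ![b k, b i, b k, b j] / q (b k) (b k)

def scalarCurvature : K :=
  ∑ i, ricciMatrix R q b i i / q (b i) (b i)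

def sectionalCurvature (i j : Fin n) : K :=
  R ![b i, b j, b i, b j] / (q (b i) (b i) * q (b j) (b j))

-- The Schouten tensor when `n = 3`; when `n = 2` it is `(scal / 4) q`, as `Ric = (scal / 2) q`.
def schouten : V →ₗ[K] V →ₗ[K] K :=
  Matrix.toLinearMap₂ b b (ricciMatrix R q b) - (scalarCurvature R q b / 4) • q

theorem schouten_apply_basis (i j : Fin n) :
    schouten R q b (b i) (b j) =
      ricciMatrix R q b i j - scalarCurvature R q b / 4 * q (b i) (b j) := by
  simp only [schouten, LinearMap.sub_apply, LinearMap.smul_apply, Matrix.toLinearMap₂_apply_basis,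
    smul_eq_mul]

variable {R q b}

theorem ricciMatrix_comm (hR : ∀ x y z w, R ![z, w, x, y] = R ![x, y, z, w]) (i j : Fin n) :
    ricciMatrix R q b i j = ricciMatrix R q b j i :=
  Finset.sum_congr rfl fun k _ => by rw [hR]

theorem schouten_comm (hq : ∀ x y, q x y = q y x)
    (hR : ∀ x y z w, R ![z, w, x, y] = R ![x, y, z, w]) (x y : V) :
    schouten R q b x y = schouten R q b y x := by
  suffices h : schouten R q b = (schouten R q b).flip from congrArg (· x y) h
  refine LinearMap.ext_basis b b fun i j => ?_
  rw [LinearMap.flip_apply, schouten_apply_basis, schouten_apply_basis, hq, ricciMatrix_comm hR]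

theorem ricciMatrix_self (ha : ∀ i, q (b i) (b i) ≠ 0) (j : Fin n) :
    ricciMatrix R q b j j = q (b j) (b j) * ∑ k, sectionalCurvature R q b k j := by
  rw [ricciMatrix, Finset.mul_sum]
  refine Finset.sum_congr rfl fun k _ => ?_
  rw [sectionalCurvature]
  field_simp [ha j, ha k]

theorem scalarCurvature_eq_sum_sectionalCurvature (ha : ∀ i, q (b i) (b i) ≠ 0) :
    scalarCurvature R q b = ∑ i, ∑ j, sectionalCurvature R q b i j := by
  rw [Finset.sum_comm]
  refine Finset.sum_congr rfl fun i _ => ?_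
  rw [ricciMatrix_self ha, mul_div_cancel_left₀ _ (ha i)]

theorem sectionalCurvature_comm (hR₁ : ∀ x y z w, R ![y, x, z, w] = -R ![x, y, z, w])
    (hR₂ : ∀ x y z w, R ![x, y, w, z] = -R ![x, y, z, w]) (i j : Fin n) :
    sectionalCurvature R q b i j = sectionalCurvature R q b j i := by
  rw [sectionalCurvature, sectionalCurvature, hR₁, hR₂, neg_neg, mul_comm]

variable [NeZero (2 : K)]

theorem ricciMatrix_of_ne (hn : n ≤ 3) (hR₁ : ∀ x y z w, R ![y, x, z, w] = -R ![x, y, z, w])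
    (hR₂ : ∀ x y z w, R ![x, y, w, z] = -R ![x, y, z, w]) {i j l : Fin n}
    (hij : i ≠ j) (hil : i ≠ l) (hjl : j ≠ l) :
    ricciMatrix R q b j l = R ![b i, b j, b i, b l] / q (b i) (b i) := by
  refine Finset.sum_eq_single i (fun k _ hki => ?_) (by simp)
  rcases Fin.eq_or_eq_of_le_three hn k i j l with h | rfl | rfl | h | h | h
  · exact absurd h hki
  · rw [apply_self_left_eq_zero hR₁, zero_div]
  · rw [apply_self_right_eq_zero hR₂, zero_div]
  · exact absurd h hij
  · exact absurd h hil
  · exact absurd h hjl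

theorem sectionalCurvature_self (hR₁ : ∀ x y z w, R ![y, x, z, w] = -R ![x, y, z, w])
    (i : Fin n) : sectionalCurvature R q b i i = 0 := by
  rw [sectionalCurvature, apply_self_left_eq_zero hR₁, zero_div]

theorem apply_basis_eq_kulkarniNomizu_schouten (hn : n ≤ 3) (hb : q.IsOrthoᵢ b)
    (ha : ∀ i, q (b i) (b i) ≠ 0) (hR₁ : ∀ x y z w, R ![y, x, z, w] = -R ![x, y, z, w])
    (hR₂ : ∀ x y z w, R ![x, y, w, z] = -R ![x, y, z, w]) {i j l : Fin n}
    (hij : i ≠ j) (hil : i ≠ l) :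
    R ![b i, b j, b i, b l] = kulkarniNomizu q (schouten R q b) ![b i, b j, b i, b l] := by
  rw [kulkarniNomizu_apply, show q (b i) (b j) = 0 from hb hij, show q (b i) (b l) = 0 from hb hil]
  by_cases hjl : j = l
  · subst hjl
    have hsec : R ![b i, b j, b i, b j] =
        q (b i) (b i) * q (b j) (b j) * sectionalCurvature R q b i j := by
      rw [sectionalCurvature]
      field_simp [ha i, ha j]
    have key := sum_add_sum_sub_half_sum_eq_of_le_three hn
      (sectionalCurvature_comm (q := q) (b := b) hR₁ hR₂) (sectionalCurvature_self hR₁) hij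
    simp only [schouten_apply_basis, ricciMatrix_self ha,
      scalarCurvature_eq_sum_sectionalCurvature ha]
    linear_combination (norm := skip) hsec - q (b i) (b i) * q (b j) (b j) * key
    rw [show (4 : K) = 2 * 2 by norm_num]
    field_simp
    ring
  · rw [schouten_apply_basis, ricciMatrix_of_ne hn hR₁ hR₂ hij hil hjl,
      show q (b j) (b l) = 0 from hb hjl]
    field_simp [ha i]
    ring

theorem eq_kulkarniNomizu_schouten (hn : n ≤ 3) (hq : ∀ x y, q x y = q y x) (hb : q.IsOrthoᵢ b)
    (ha : ∀ i, q (b i) (b i) ≠ 0) (hR₁ : ∀ x y z w, R ![y, x, z, w] = -R ![x, y, z, w])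
    (hR₂ : ∀ x y z w, R ![x, y, w, z] = -R ![x, y, z, w])
    (hR₃ : ∀ x y z w, R ![z, w, x, y] = R ![x, y, z, w]) :
    R = kulkarniNomizu q (schouten R q b) := by
  have hs := schouten_comm (b := b) hq hR₃
  rw [← sub_eq_zero]
  refine eq_zero_of_apply_basis_eq_zero hn b (fun x y z w => ?_) (fun x y z w => ?_)
    fun i j l hij hil => ?_
  · rw [sub_apply, sub_apply, hR₁, kulkarniNomizu_antisymm_left hq hs, neg_sub_neg, neg_sub]
  · rw [sub_apply, sub_apply, hR₂, kulkarniNomizu_antisymm_right hq hs, neg_sub_neg, neg_sub]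
  · rw [sub_apply, sub_eq_zero]
    exact apply_basis_eq_kulkarniNomizu_schouten hn hb ha hR₁ hR₂ hij hil

end Schouten

end

/-- if `dim V ≤ 3` and `q` is a nondegenerate symmetric bilinear form on `V`,
then every algebraic curvature tensor `R` on `V` is the Kulkarni–Nomizu product `q ⊛ s` of
`q` with some symmetric bilinear form `s`. -/
theorem stmt_6 (V : Type*) [AddCommGroup V] [Module ℚ V] [FiniteDimensional ℚ V]
    (hdim : finrank ℚ V ≤ 3)
    (q : V →ₗ[ℚ] V →ₗ[ℚ] ℚ) (hqsymm : ∀ x y, q x y = q y x)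
    (hqnd : ∀ v, (∀ w, q v w = 0) → v = 0)
    (R : MultilinearMap ℚ (fun _ : Fin 4 => V) ℚ)
    (hR : ∀ x y z w : V,
      R ![y, x, z, w] = -R ![x, y, z, w] ∧
      R ![x, y, w, z] = -R ![x, y, z, w] ∧
      R ![z, w, x, y] = R ![x, y, z, w] ∧
      R ![x, y, z, w] + R ![y, z, x, w] + R ![z, x, y, w] = 0) :
    ∃ s : V →ₗ[ℚ] V →ₗ[ℚ] ℚ, (∀ x y, s x y = s y x) ∧
      ∀ x y z w : V, R ![x, y, z, w] =
        q x z * s y w - q z y * s x w - q x w * s z y + q y w * s x z := by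
  have hR₁ x y z w := (hR x y z w).1
  have hR₂ x y z w := (hR x y z w).2.1
  have hR₃ x y z w := (hR x y z w).2.2.1
  obtain ⟨b, hb⟩ := LinearMap.BilinForm.exists_orthogonal_basis (B := q) ⟨hqsymm⟩
  have ha := hb.not_isOrtho_basis_self_of_separatingLeft hqnd
  refine ⟨schouten R q b, schouten_comm hqsymm hR₃, fun x y z w => ?_⟩
  exact congrArg (· ![x, y, z, w]) (eq_kulkarniNomizu_schouten hdim hqsymm hb ha hR₁ hR₂ hR₃)
end

section
/- Let T be a finite abelian group and b₀ : T × T → ℚ/ℤ a symmetric bilinear form (possibly degenerate). Let T̂ = Hom(T, ℚ/ℤ). Then the form b on T × T̂ defined by b((s₁,σ₁),(s₂,σ₂)) = b₀(s₁,s₂) + σ₁(s₂) + σ₂(s₁) is a nonsingular symmetric bilinear form: the induced map T × T̂ → Hom(T × T̂, ℚ/ℤ) is an isomorphism. -/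
/-!
Testing `b (s, σ) = h` against `(0, τ)` and `(t, 0)` splits it into `τ s = h (0, τ)` for all
characters `τ`, and `b₀ s t + σ t = h (t, 0)` for all `t`. The first equation has exactly one
solution `s` because evaluation `T → T̂̂` is bijective: it is injective since characters separate
points, and `|T̂̂| = |T̂| = |T|` because `ℚ/ℤ` has a cyclic `n`-torsion subgroup of order `n` for
every `n`, which is what duality of finite abelian groups needs. The second equation then
determines `σ = h(·, 0) - b₀ s`.
-/

namespace AddCircle

variable {𝕜 : Type*} [Field 𝕜] (p : 𝕜)

theorem exists_zsmul_eq_of_nsmul_eq_zero [CharZero 𝕜] {n : ℕ} (hn : n ≠ 0) {x : AddCircle p}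
    (hx : n • x = 0) : ∃ k : ℤ, k • ((p / n : 𝕜) : AddCircle p) = x := by
  obtain ⟨y, rfl⟩ := QuotientAddGroup.mk_surjective x
  rw [← coe_nsmul, coe_eq_zero_iff] at hx
  obtain ⟨k, hk⟩ := hx
  refine ⟨k, ?_⟩
  rw [nsmul_eq_mul, zsmul_eq_mul] at hk
  rw [← coe_zsmul, zsmul_eq_mul, mul_div_assoc', hk,
    mul_div_cancel_left₀ _ (Nat.cast_ne_zero.2 hn)]

variable [LinearOrder 𝕜] [IsStrictOrderedRing 𝕜] [Fact (0 < p)]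

instance hasEnoughRootsOfUnity (n : ℕ) [NeZero n] :
    HasEnoughRootsOfUnity (Multiplicative (AddCircle p)) n := by
  have hζ : IsPrimitiveRoot (Multiplicative.ofAdd ((p / n : 𝕜) : AddCircle p)) n := by
    simpa [orderOf_ofAdd_eq_addOrderOf, addOrderOf_period_div (NeZero.pos n)] using
      IsPrimitiveRoot.orderOf (Multiplicative.ofAdd ((p / n : 𝕜) : AddCircle p))
  refine ⟨⟨_, hζ⟩, ⟨hζ.toRootsOfUnity, fun x => ?_⟩⟩
  have hx : n • Multiplicative.toAdd (x : (Multiplicative (AddCircle p))ˣ).val = 0 := by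
    simpa using congrArg (fun u : (Multiplicative (AddCircle p))ˣ => Multiplicative.toAdd u.val)
      ((mem_rootsOfUnity _ _).1 x.2)
  obtain ⟨k, hk⟩ := exists_zsmul_eq_of_nsmul_eq_zero p (NeZero.ne n) hx
  refine ⟨k, Subtype.ext (Units.ext ?_)⟩
  simpa [← ofAdd_zsmul] using congrArg Multiplicative.ofAdd hk

variable (T : Type*) [AddCommGroup T] [Finite T]

theorem card_addMonoidHom : Nat.card (T →+ AddCircle p) = Nat.card T :=
  calc Nat.card (T →+ AddCircle p)
      = Nat.card (Multiplicative T →* (Multiplicative (AddCircle p))ˣ) :=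
        Nat.card_congr <| AddMonoidHom.toMultiplicative.trans
          (MulEquiv.monoidHomCongrRight toUnits).toEquiv
    _ = Nat.card T := CommGroup.card_monoidHom_of_hasEnoughRootsOfUnity _ _

instance finite_addMonoidHom : Finite (T →+ AddCircle p) :=
  Nat.finite_of_card_ne_zero <| by rw [card_addMonoidHom]; exact Nat.card_pos.ne'

end AddCircle

theorem CharacterModule.bijective_eval (T : Type*) [AddCommGroup T] [Finite T] :
    Function.Bijective
      (AddMonoidHom.eval : T →+ (T →+ AddCircle (1 : ℚ)) →+ AddCircle (1 : ℚ)) := by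
  have : Fact ((0 : ℚ) < 1) := ⟨one_pos⟩
  refine (Nat.bijective_iff_injective_and_card _).2
    ⟨fun s s' h => ?_, by rw [AddCircle.card_addMonoidHom, AddCircle.card_addMonoidHom]⟩
  refine sub_eq_zero.1 (eq_zero_of_character_apply fun τ => ?_)
  rw [map_sub, sub_eq_zero]
  exact DFunLike.congr_fun h τ

section TwistedHyperbolicForm

variable {T A : Type*} [AddCommGroup T] [AddCommGroup A]

def twistedHyperbolicForm (b₀ : T → T → A) (x y : T × (T →+ A)) : A :=
  b₀ x.1 y.1 + x.2 y.1 + y.2 x.1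

variable {b₀ : T → T → A}

theorem twistedHyperbolicForm_comm (hsym : ∀ s t, b₀ s t = b₀ t s) (x y : T × (T →+ A)) :
    twistedHyperbolicForm b₀ x y = twistedHyperbolicForm b₀ y x := by
  simp only [twistedHyperbolicForm, hsym x.1 y.1]
  abel

theorem twistedHyperbolicForm_add_left (hadd : ∀ s s' t, b₀ (s + s') t = b₀ s t + b₀ s' t)
    (x x' y : T × (T →+ A)) :
    twistedHyperbolicForm b₀ (x + x') y =
      twistedHyperbolicForm b₀ x y + twistedHyperbolicForm b₀ x' y := by
  simp only [twistedHyperbolicForm, Prod.fst_add, Prod.snd_add, hadd, AddMonoidHom.add_apply,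
    map_add]
  abel

theorem forall_twistedHyperbolicForm_eq_iff (hb₀ : ∀ s, b₀ s 0 = 0) (h : T × (T →+ A) →+ A)
    (x : T × (T →+ A)) :
    (∀ y, twistedHyperbolicForm b₀ x y = h y) ↔
      (∀ τ : T →+ A, τ x.1 = h (0, τ)) ∧ ∀ t, b₀ x.1 t + x.2 t = h (t, 0) := by
  refine ⟨fun hx => ⟨fun τ => ?_, fun t => ?_⟩, fun ⟨h₁, h₂⟩ y => ?_⟩
  · simpa [twistedHyperbolicForm, hb₀] using hx (0, τ)
  · simpa [twistedHyperbolicForm] using hx (t, 0)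
  · have hy : h y = h (y.1, 0) + h (0, y.2) := by
      rw [← map_add, Prod.mk_add_mk, add_zero, zero_add]
    rw [hy, ← h₁, ← h₂, twistedHyperbolicForm]

end TwistedHyperbolicForm

theorem existsUnique_twistedHyperbolicForm_eq {T : Type*} [AddCommGroup T] [Finite T]
    {b₀ : T → T → AddCircle (1 : ℚ)} (hb₀ : ∀ s t t', b₀ s (t + t') = b₀ s t + b₀ s t')
    (h : T × (T →+ AddCircle (1 : ℚ)) →+ AddCircle (1 : ℚ)) :
    ∃! x, ∀ y, twistedHyperbolicForm b₀ x y = h y := by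
  obtain ⟨s, hs⟩ := (CharacterModule.bijective_eval T).2 (h.comp (AddMonoidHom.inr _ _))
  let σ := h.comp (AddMonoidHom.inl _ _) - AddMonoidHom.mk' (b₀ s) (hb₀ s)
  have hzero : ∀ s, b₀ s 0 = 0 := fun s => (AddMonoidHom.mk' (b₀ s) (hb₀ s)).map_zero
  simp only [forall_twistedHyperbolicForm_eq_iff hzero h]
  refine ⟨(s, σ), ⟨fun τ => DFunLike.congr_fun hs τ, fun t => add_sub_cancel _ _⟩, ?_⟩
  rintro ⟨s', σ'⟩ ⟨hs', hσ'⟩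
  obtain rfl : s' = s := (CharacterModule.bijective_eval T).1 (hs.symm ▸ AddMonoidHom.ext hs')
  exact Prod.ext rfl (AddMonoidHom.ext fun t => eq_sub_of_add_eq' (hσ' t))

/-- for a finite abelian group `T` with a symmetric bilinear form
`b₀ : T × T → ℚ/ℤ` and `T̂ = Hom(T, ℚ/ℤ)`, the form
`b((s₁,σ₁),(s₂,σ₂)) = b₀(s₁,s₂) + σ₁(s₂) + σ₂(s₁)` on `T × T̂` is a nonsingular symmetric
bilinear form: `x ↦ b(x,·)` is an isomorphism onto `Hom(T × T̂, ℚ/ℤ)`. -/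
theorem stmt_17 (T : Type*) [AddCommGroup T] [Finite T]
    (b₀ : T → T → AddCircle (1 : ℚ))
    (hadd : ∀ s s' t, b₀ (s + s') t = b₀ s t + b₀ s' t)
    (hsym : ∀ s t, b₀ s t = b₀ t s) :
    let b : (T × (T →+ AddCircle (1 : ℚ))) → (T × (T →+ AddCircle (1 : ℚ))) →
        AddCircle (1 : ℚ) := fun p q => b₀ p.1 q.1 + p.2 q.1 + q.2 p.1
    (∀ x y, b x y = b y x) ∧
    (∀ x x' y, b (x + x') y = b x y + b x' y) ∧
    (∀ h : T × (T →+ AddCircle (1 : ℚ)) →+ AddCircle (1 : ℚ),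
      ∃! x, ∀ y, b x y = h y) := by
  intro b
  have hadd_right : ∀ s t t', b₀ s (t + t') = b₀ s t + b₀ s t' := fun s t t' => by
    rw [hsym, hadd, hsym t, hsym t']
  exact ⟨twistedHyperbolicForm_comm hsym, twistedHyperbolicForm_add_left hadd,
    existsUnique_twistedHyperbolicForm_eq hadd_right⟩
end
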